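/- Let n and U be finite types. On the set M of pairs (W, p), where W : Matrix n n ℝ is a real matrix with zero diagonal (∀ i, W i i = 0, the matrix of dependency terms of a linear SCM) and p is a probability mass function on U, define d((W₁,p₁),(W₂,p₂)) = Σ_{i≠j} |W₁ i j − W₂ i j| + √(JSD(p₁,p₂)). Then d is a metric on M: it is nonnegative, d((W₁,p₁),(W₂,p₂)) = 0 holds if and only if W₁ = W₂ and p₁ = p₂, it is symmetric, and it satisfies the triangle inequality. -/

import Mathlib

open Finset

/-- A probability mass function on a finite type: nonnegative and summing to 1. -/
def IsPMF {U : Type*} [Fintype U] (p : U → ℝ) : Prop :=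
  (∀ i, 0 ≤ p i) ∧ ∑ i, p i = 1

/-- Kullback–Leibler divergence (with the convention `0 * log (0 / x) = 0`,
which holds automatically in `ℝ`). -/
noncomputable def KL {U : Type*} [Fintype U] (p q : U → ℝ) : ℝ :=
  ∑ i, p i * Real.log (p i / q i)

/-- Jensen–Shannon divergence. -/
noncomputable def JSD {U : Type*} [Fintype U] (p q : U → ℝ) : ℝ :=
  (1 / 2) * KL p (fun i => (p i + q i) / 2) + (1 / 2) * KL q (fun i => (p i + q i) / 2)

/-- A matrix has zero diagonal. -/
def ZeroDiag {n : Type*} (W : Matrix n n ℝ) : Prop := ∀ i, W i i = 0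

/-- The distance between two linear SCMs `(W, p)`:
sum of absolute differences of off-diagonal dependency terms
plus the square root of the Jensen–Shannon divergence. -/
noncomputable def scmDist {n U : Type*} [Fintype n] [Fintype U] [DecidableEq n]
    (M₁ M₂ : Matrix n n ℝ × (U → ℝ)) : ℝ :=
  (∑ ij ∈ Finset.univ.filter (fun ij : n × n => ij.1 ≠ ij.2),
      |M₁.1 ij.1 ij.2 - M₂.1 ij.1 ij.2|) + Real.sqrt (JSD M₁.2 M₂.2)

open Real

/-!
Let `D a b = 2 η ((a + b) / 2) - η a - η b` (this is `jsdTerm`) with `η = Real.negMulLog`, so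
that `JSD p q = (∑ i, D (p i) (q i)) / 2`. By Minkowski's inequality in `ℓ²`, the triangle
inequality for `√JSD` reduces to the scalar one for `√D` on `[0, ∞)` (Endres–Schindelin).
For `a ≤ b ≤ c` it holds because `t ↦ √(D a t) - √(D b t)` is antitone on `[b, ∞)`. Comparing
derivatives, this amounts to `x ↦ D x t / (log t - log ((x + t) / 2)) ^ 2` being antitone on
`[0, t)`; with `u = 2 t / (x + t) ∈ (1, 2)`, the sign of its derivative is that of
`u log u + (2 - u) log (2 - u) + log u log (2 - u)`, which vanishes at `u = 1` and is
nonincreasing on `[1, 2)`. The other orderings of `a, b, c` follow from the monotonicity of `D`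
in each argument away from the diagonal, and strict concavity of `η` makes `D a b = 0` force
`a = b`.
-/

noncomputable def jsdTerm (a b : ℝ) : ℝ :=
  2 * negMulLog ((a + b) / 2) - negMulLog a - negMulLog b

@[fun_prop]
lemma Continuous.jsdTerm {f g : ℝ → ℝ} (hf : Continuous f) (hg : Continuous g) :
    Continuous fun x => jsdTerm (f x) (g x) := by
  unfold _root_.jsdTerm; fun_prop

lemma jsdTerm_comm (a b : ℝ) : jsdTerm a b = jsdTerm b a := by
  rw [jsdTerm, jsdTerm, add_comm]; ring

@[simp]
lemma jsdTerm_self (a : ℝ) : jsdTerm a a = 0 := by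
  rw [jsdTerm, add_self_div_two]; ring

lemma jsdTerm_nonneg {a b : ℝ} (ha : 0 ≤ a) (hb : 0 ≤ b) : 0 ≤ jsdTerm a b := by
  have h := concaveOn_negMulLog.2 ha hb (by norm_num : (0 : ℝ) ≤ 1 / 2)
    (by norm_num : (0 : ℝ) ≤ 1 / 2) (by norm_num)
  simp only [smul_eq_mul] at h
  rw [jsdTerm, show (a + b) / 2 = 1 / 2 * a + 1 / 2 * b by ring]
  linarith

lemma jsdTerm_pos {a b : ℝ} (ha : 0 ≤ a) (hb : 0 ≤ b) (hab : a ≠ b) : 0 < jsdTerm a b := by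
  have h := strictConcaveOn_negMulLog.2 ha hb hab (by norm_num : (0 : ℝ) < 1 / 2)
    (by norm_num : (0 : ℝ) < 1 / 2) (by norm_num)
  simp only [smul_eq_mul] at h
  rw [jsdTerm, show (a + b) / 2 = 1 / 2 * a + 1 / 2 * b by ring]
  linarith

lemma jsdTerm_eq_zero_iff {a b : ℝ} (ha : 0 ≤ a) (hb : 0 ≤ b) : jsdTerm a b = 0 ↔ a = b :=
  ⟨fun h => by_contra fun hab => (jsdTerm_pos ha hb hab).ne' h, fun h => h ▸ jsdTerm_self a⟩

lemma hasDerivAt_jsdTerm_right (a : ℝ) {t : ℝ} (ht : t ≠ 0) (hat : a + t ≠ 0) :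
    HasDerivAt (jsdTerm a) (log t - log ((a + t) / 2)) t := by
  have hmid : HasDerivAt (fun s => (a + s) / 2) (1 / 2) t := by
    simpa using ((hasDerivAt_id t).const_add a).div_const 2
  have h := ((((hasDerivAt_negMulLog (by positivity)).comp t hmid).const_mul 2).sub_const
    (negMulLog a)).sub (hasDerivAt_negMulLog ht)
  exact h.congr_deriv (by ring)

lemma hasDerivAt_jsdTerm_left (b : ℝ) {x : ℝ} (hx : x ≠ 0) (hxb : x + b ≠ 0) :
    HasDerivAt (fun x => jsdTerm x b) (log x - log ((x + b) / 2)) x := by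
  simp_rw [jsdTerm_comm _ b, add_comm x b]
  exact hasDerivAt_jsdTerm_right b hx (by rwa [add_comm])

lemma monotoneOn_jsdTerm {a : ℝ} (ha : 0 ≤ a) : MonotoneOn (jsdTerm a) (Set.Ici a) := by
  refine monotoneOn_of_hasDerivWithinAt_nonneg (f' := fun t => log t - log ((a + t) / 2))
    (convex_Ici a) (continuous_const.jsdTerm continuous_id).continuousOn
    (fun t ht => ?_) (fun t ht => ?_)
  all_goals rw [interior_Ici] at ht; have ht : a < t := ht
  · exact (hasDerivAt_jsdTerm_right a (by linarith) (by linarith)).hasDerivWithinAt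
  · exact sub_nonneg.2 (log_le_log (by linarith) (by linarith))

lemma antitoneOn_jsdTerm (a : ℝ) : AntitoneOn (jsdTerm a) (Set.Icc 0 a) := by
  refine antitoneOn_of_hasDerivWithinAt_nonpos (f' := fun t => log t - log ((a + t) / 2))
    (convex_Icc 0 a) (continuous_const.jsdTerm continuous_id).continuousOn
    (fun t ht => ?_) (fun t ht => ?_)
  all_goals rw [interior_Icc] at ht; obtain ⟨ht0, hta⟩ := ht
  · exact (hasDerivAt_jsdTerm_right a ht0.ne' (by linarith)).hasDerivWithinAt
  · exact sub_nonpos.2 (log_le_log ht0 (by linarith))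

lemma mul_log_add_mul_log_two_sub_le {u : ℝ} (h1 : 1 ≤ u) (h2 : u < 2) :
    u * log u + (2 - u) * log (2 - u) ≤ -(log u * log (2 - u)) := by
  set F := fun u : ℝ => -(log u * log (2 - u)) - (u * log u + (2 - u) * log (2 - u))
  have hF : ∀ v ∈ Set.Ioo (0 : ℝ) 2, HasDerivAt F
      ((v - 1) / (v * (2 - v)) * (v * log v + (2 - v) * log (2 - v))) v := by
    rintro v ⟨hv0, hv2⟩
    have hsub : HasDerivAt (fun u : ℝ => 2 - u) (-1) v := by
      simpa using (hasDerivAt_id v).const_sub 2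
    have h := (((hasDerivAt_log hv0.ne').mul
      ((hasDerivAt_log (by linarith)).comp v hsub)).neg).sub
        ((hasDerivAt_mul_log hv0.ne').add ((hasDerivAt_mul_log (by linarith)).comp v hsub))
    have hv2 : 2 - v ≠ 0 := by linarith
    exact h.congr_deriv (by simp only [Function.comp_apply]; field_simp; ring)
  have hmono : MonotoneOn F (Set.Ico 1 2) := by
    refine monotoneOn_of_hasDerivWithinAt_nonneg
      (f' := fun v => (v - 1) / (v * (2 - v)) * (v * log v + (2 - v) * log (2 - v)))
      (convex_Ico 1 2)
      (fun v hv => (hF v ⟨by linarith [hv.1], hv.2⟩).continuousAt.continuousWithinAt)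
      (fun v hv => ?_) (fun v hv => ?_)
    all_goals rw [interior_Ico] at hv; obtain ⟨hv1, hv2⟩ := hv
    · exact (hF v ⟨by linarith, hv2⟩).hasDerivWithinAt
    · -- `jsdTerm v (2 - v) = v * log v + (2 - v) * log (2 - v)`
      have hg : 0 ≤ jsdTerm v (2 - v) := jsdTerm_nonneg (by linarith) (by linarith)
      norm_num [jsdTerm, negMulLog] at hg
      exact mul_nonneg (div_nonneg (by linarith) (mul_nonneg (by linarith) (by linarith)))
        (by linarith)
  have h := hmono ⟨le_rfl, by norm_num⟩ ⟨h1, h2⟩ h1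
  simp only [F, log_one] at h
  norm_num at h
  linarith

lemma jsdTerm_le_mul_log_sub_mul_log_sub {x t : ℝ} (hx : 0 < x) (hxt : x ≤ t) :
    jsdTerm x t ≤
      (x + t) / 2 * ((log t - log ((x + t) / 2)) * (log ((x + t) / 2) - log x)) := by
  set m := (x + t) / 2 with hm_def
  have hm : 0 < m := by linarith
  have h := mul_log_add_mul_log_two_sub_le (u := t / m) ((one_le_div hm).2 (by linarith))
    ((div_lt_iff₀ hm).2 (by linarith))
  rw [show 2 - t / m = x / m by field_simp; linarith, log_div (by linarith) hm.ne',
    log_div hx.ne' hm.ne'] at h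
  calc jsdTerm x t = m * (t / m * (log t - log m) + x / m * (log x - log m)) := by
        simp only [jsdTerm, negMulLog, ← hm_def]
        field_simp
        ring
    _ ≤ m * -((log t - log m) * (log x - log m)) := mul_le_mul_of_nonneg_left h hm.le
    _ = _ := by ring

lemma log_sub_log_mid_mul_sqrt_jsdTerm_le {a b t : ℝ} (ha : 0 ≤ a) (hab : a ≤ b)
    (hbt : b < t) :
    (log t - log ((a + t) / 2)) * √(jsdTerm b t) ≤
      (log t - log ((b + t) / 2)) * √(jsdTerm a t) := by
  set L := fun x => log t - log ((x + t) / 2)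
  have hL : ∀ x ∈ Set.Icc 0 b, 0 < L x := fun x hx =>
    sub_pos.2 (log_lt_log (by linarith [hx.1]) (by linarith [hx.2]))
  have hanti : AntitoneOn (fun x => jsdTerm x t / L x ^ 2) (Set.Icc 0 b) := by
    refine antitoneOn_of_hasDerivWithinAt_nonpos (convex_Icc 0 b)
      (f' := fun x => (jsdTerm x t - (x + t) / 2 * (L x * (log ((x + t) / 2) - log x))) /
        ((x + t) / 2 * L x ^ 3)) ?_ (fun x hx => ?_) (fun x hx => ?_)
    · refine (Continuous.continuousOn (by fun_prop)).div ((continuousOn_const.sub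
        (ContinuousOn.log (by fun_prop) fun x hx => ?_)).pow 2)
        fun x hx => pow_ne_zero 2 (hL x hx).ne'
      linarith [hx.1]
    all_goals rw [interior_Icc] at hx; obtain ⟨hx0, hxb⟩ := hx
    · have hmid : HasDerivAt (fun x => (x + t) / 2) (1 / 2) x := by
        simpa using ((hasDerivAt_id x).add_const t).div_const 2
      have hLx := ((hmid.log (by linarith)).const_sub (log t)).pow 2
      have h := (hasDerivAt_jsdTerm_left t hx0.ne' (by linarith)).div hLx
        (pow_ne_zero 2 (hL x ⟨hx0.le, hxb.le⟩).ne')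
      refine (h.congr_deriv ?_).hasDerivWithinAt
      have hLx0 := (hL x ⟨hx0.le, hxb.le⟩).ne'
      have hxt : x + t ≠ 0 := by linarith
      simp only [Pi.pow_apply, L] at hLx0 ⊢
      field_simp
      ring
    · exact div_nonpos_of_nonpos_of_nonneg
        (sub_nonpos.2 (jsdTerm_le_mul_log_sub_mul_log_sub hx0 (by linarith)))
        (mul_nonneg (by linarith) (pow_nonneg (hL x ⟨hx0.le, hxb.le⟩).le 3))
  have h := hanti ⟨ha, hab⟩ ⟨ha.trans hab, le_rfl⟩ hab
  have hLa := hL a ⟨ha, hab⟩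
  have hLb := hL b ⟨ha.trans hab, le_rfl⟩
  rw [div_le_div_iff₀ (pow_pos hLb 2) (pow_pos hLa 2)] at h
  refine (pow_le_pow_iff_left₀ (mul_nonneg hLa.le (sqrt_nonneg _))
    (mul_nonneg hLb.le (sqrt_nonneg _)) two_ne_zero).1 ?_
  rw [mul_pow, mul_pow, sq_sqrt (jsdTerm_nonneg (ha.trans hab) (by linarith)),
    sq_sqrt (jsdTerm_nonneg ha (by linarith))]
  linarith

lemma sqrt_jsdTerm_triangle_of_le_of_le {a b c : ℝ} (ha : 0 ≤ a) (hab : a ≤ b)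
    (hbc : b ≤ c) :
    √(jsdTerm a c) ≤ √(jsdTerm a b) + √(jsdTerm b c) := by
  have hanti : AntitoneOn (fun t => √(jsdTerm a t) - √(jsdTerm b t)) (Set.Ici b) := by
    refine antitoneOn_of_hasDerivWithinAt_nonpos (convex_Ici b)
      (f' := fun t => (log t - log ((a + t) / 2)) / (2 * √(jsdTerm a t)) -
        (log t - log ((b + t) / 2)) / (2 * √(jsdTerm b t)))
      (Continuous.continuousOn (by fun_prop)) (fun t ht => ?_) (fun t ht => ?_)
    all_goals
      rw [interior_Ici] at ht
      have ht : b < t := ht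
      have hDa := jsdTerm_pos ha (by linarith) (by linarith : a ≠ t)
      have hDb := jsdTerm_pos (ha.trans hab) (by linarith) (by linarith : b ≠ t)
    · exact (((hasDerivAt_jsdTerm_right a (by linarith) (by linarith)).sqrt hDa.ne').sub
        ((hasDerivAt_jsdTerm_right b (by linarith) (by linarith)).sqrt hDb.ne')).hasDerivWithinAt
    · rw [sub_nonpos, div_le_div_iff₀ (by positivity) (by positivity)]
      linarith [log_sub_log_mid_mul_sqrt_jsdTerm_le ha hab ht]
  have h := hanti Set.self_mem_Ici hbc hbc
  simp only [jsdTerm_self, sqrt_zero, sub_zero] at h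
  linarith

lemma sqrt_jsdTerm_triangle {a b c : ℝ} (ha : 0 ≤ a) (hb : 0 ≤ b) (hc : 0 ≤ c) :
    √(jsdTerm a c) ≤ √(jsdTerm a b) + √(jsdTerm b c) := by
  wlog hac : a ≤ c generalizing a c
  · rw [jsdTerm_comm a c, jsdTerm_comm a b, jsdTerm_comm b c, add_comm]
    exact this hc ha (by linarith)
  rcases le_total b a with hba | hab
  · have h : jsdTerm c a ≤ jsdTerm c b :=
      antitoneOn_jsdTerm c ⟨hb, hba.trans hac⟩ ⟨ha, hac⟩ hba
    rw [jsdTerm_comm c a, jsdTerm_comm c b] at h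
    exact (sqrt_le_sqrt h).trans (le_add_of_nonneg_left (sqrt_nonneg _))
  rcases le_total c b with hcb | hbc
  · exact (sqrt_le_sqrt (monotoneOn_jsdTerm ha hac (hac.trans hcb) hcb)).trans
      (le_add_of_nonneg_right (sqrt_nonneg _))
  · exact sqrt_jsdTerm_triangle_of_le_of_le ha hab hbc

lemma sqrt_sum_le_add_of_sqrt_le {ι : Type*} [Fintype ι] {d e f : ι → ℝ}
    (hd : ∀ i, 0 ≤ d i) (he : ∀ i, 0 ≤ e i) (h : ∀ i, √(f i) ≤ √(d i) + √(e i)) :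
    √(∑ i, f i) ≤ √(∑ i, d i) + √(∑ i, e i) := by
  let toL2 (g : ι → ℝ) : EuclideanSpace ℝ ι := WithLp.toLp 2 fun i => √(g i)
  have hnorm : ∀ g : ι → ℝ, (∀ i, 0 ≤ g i) → ‖toL2 g‖ = √(∑ i, g i) := fun g hg => by
    simp [toL2, EuclideanSpace.norm_eq, sq_sqrt (hg _)]
  have hsum : √(∑ i, f i) ≤ ‖toL2 d + toL2 e‖ := by
    rw [EuclideanSpace.norm_eq]
    refine sqrt_le_sqrt (sum_le_sum fun i _ => ?_)
    simpa [toL2] using (sqrt_le_iff.1 (h i)).2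
  rw [← hnorm d hd, ← hnorm e he]
  exact hsum.trans (norm_add_le _ _)

lemma mul_log_div_mid_add_mul_log_div_mid {x y : ℝ} (hx : 0 ≤ x) (hy : 0 ≤ y) :
    x * log (x / ((x + y) / 2)) + y * log (y / ((x + y) / 2)) = jsdTerm x y := by
  have h : ∀ z, 0 ≤ z → z ≤ x + y →
      z * log (z / ((x + y) / 2)) = z * log z - z * log ((x + y) / 2) := by
    intro z hz hzs
    rcases hz.eq_or_lt with rfl | hz
    · simp
    · rw [log_div hz.ne' (by linarith)]; ring
  rw [h x hx (by linarith), h y hy (by linarith)]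
  simp only [jsdTerm, negMulLog]
  ring

section JensenShannon

variable {U : Type*} [Fintype U] {p q r : U → ℝ}

lemma JSD_eq_sum_jsdTerm (hp : ∀ i, 0 ≤ p i) (hq : ∀ i, 0 ≤ q i) :
    JSD p q = (∑ i, jsdTerm (p i) (q i)) / 2 := by
  simp only [JSD, KL, ← mul_log_div_mid_add_mul_log_div_mid (hp _) (hq _), sum_add_distrib]
  ring

lemma JSD_comm (hp : ∀ i, 0 ≤ p i) (hq : ∀ i, 0 ≤ q i) : JSD p q = JSD q p := by
  simp only [JSD_eq_sum_jsdTerm hp hq, JSD_eq_sum_jsdTerm hq hp, jsdTerm_comm (p _)]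

lemma sqrt_JSD_eq_zero_iff (hp : ∀ i, 0 ≤ p i) (hq : ∀ i, 0 ≤ q i) :
    √(JSD p q) = 0 ↔ p = q := by
  have hnonneg : ∀ i ∈ univ, 0 ≤ jsdTerm (p i) (q i) := fun i _ => jsdTerm_nonneg (hp i) (hq i)
  rw [sqrt_eq_zero', JSD_eq_sum_jsdTerm hp hq, div_le_iff₀ two_pos, zero_mul,
    (sum_nonneg hnonneg).ge_iff_eq', sum_eq_zero_iff_of_nonneg hnonneg, funext_iff]
  simp only [mem_univ, true_imp_iff, jsdTerm_eq_zero_iff (hp _) (hq _)]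

lemma sqrt_JSD_triangle (hp : ∀ i, 0 ≤ p i) (hq : ∀ i, 0 ≤ q i) (hr : ∀ i, 0 ≤ r i) :
    √(JSD p r) ≤ √(JSD p q) + √(JSD q r) := by
  simp only [JSD_eq_sum_jsdTerm hp hr, JSD_eq_sum_jsdTerm hp hq, JSD_eq_sum_jsdTerm hq hr,
    sqrt_div' _ two_pos.le, ← add_div]
  refine div_le_div_of_nonneg_right (sqrt_sum_le_add_of_sqrt_le
    (fun i => jsdTerm_nonneg (hp i) (hq i)) (fun i => jsdTerm_nonneg (hq i) (hr i))
    fun i => sqrt_jsdTerm_triangle (hp i) (hq i) (hr i)) (sqrt_nonneg _)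

end JensenShannon

section OffDiagonal

variable {n : Type*} [Fintype n] [DecidableEq n]

noncomputable def offDiagDist (A B : Matrix n n ℝ) : ℝ :=
  ∑ ij ∈ univ.filter (fun ij : n × n => ij.1 ≠ ij.2), |A ij.1 ij.2 - B ij.1 ij.2|

lemma offDiagDist_nonneg (A B : Matrix n n ℝ) : 0 ≤ offDiagDist A B :=
  sum_nonneg fun _ _ => abs_nonneg _

lemma offDiagDist_comm (A B : Matrix n n ℝ) : offDiagDist A B = offDiagDist B A :=
  sum_congr rfl fun _ _ => abs_sub_comm _ _

lemma offDiagDist_triangle (A B C : Matrix n n ℝ) :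
    offDiagDist A C ≤ offDiagDist A B + offDiagDist B C := by
  rw [offDiagDist, offDiagDist, offDiagDist, ← sum_add_distrib]
  exact sum_le_sum fun _ _ => abs_sub_le _ _ _

lemma offDiagDist_eq_zero_iff {A B : Matrix n n ℝ} (hA : ZeroDiag A) (hB : ZeroDiag B) :
    offDiagDist A B = 0 ↔ A = B := by
  rw [offDiagDist, sum_eq_zero_iff_of_nonneg fun _ _ => abs_nonneg _]
  refine ⟨fun h => Matrix.ext fun i j => ?_, by rintro rfl _ _; simp⟩
  rcases eq_or_ne i j with rfl | hij
  · rw [hA, hB]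
  · exact sub_eq_zero.1 (abs_eq_zero.1 (h (i, j) (mem_filter.2 ⟨mem_univ _, hij⟩)))

end OffDiagonal

lemma scmDist_eq {n U : Type*} [Fintype n] [Fintype U] [DecidableEq n]
    (M₁ M₂ : Matrix n n ℝ × (U → ℝ)) :
    scmDist M₁ M₂ = offDiagDist M₁.1 M₂.1 + √(JSD M₁.2 M₂.2) :=
  rfl

theorem scmDist_is_metric {n U : Type*} [Fintype n] [Fintype U] [DecidableEq n]
    (M : Set (Matrix n n ℝ × (U → ℝ)))
    (hM : M = {Wp | ZeroDiag Wp.1 ∧ IsPMF Wp.2}) :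
    (∀ M₁ ∈ M, ∀ M₂ ∈ M, 0 ≤ scmDist M₁ M₂) ∧
    (∀ M₁ ∈ M, ∀ M₂ ∈ M, (scmDist M₁ M₂ = 0 ↔ M₁.1 = M₂.1 ∧ M₁.2 = M₂.2)) ∧
    (∀ M₁ ∈ M, ∀ M₂ ∈ M, scmDist M₁ M₂ = scmDist M₂ M₁) ∧
    (∀ M₁ ∈ M, ∀ M₂ ∈ M, ∀ M₃ ∈ M, scmDist M₁ M₃ ≤ scmDist M₁ M₂ + scmDist M₂ M₃) := by
  subst hM
  simp only [scmDist_eq]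
  refine ⟨fun M₁ _ M₂ _ => add_nonneg (offDiagDist_nonneg _ _) (sqrt_nonneg _),
    fun M₁ h₁ M₂ h₂ => ?_, fun M₁ h₁ M₂ h₂ => ?_, fun M₁ h₁ M₂ h₂ M₃ h₃ => ?_⟩
  · rw [add_eq_zero_iff_of_nonneg (offDiagDist_nonneg _ _) (sqrt_nonneg _),
      offDiagDist_eq_zero_iff h₁.1 h₂.1, sqrt_JSD_eq_zero_iff h₁.2.1 h₂.2.1]
  · rw [offDiagDist_comm, JSD_comm h₁.2.1 h₂.2.1]
  · linarith [offDiagDist_triangle M₁.1 M₂.1 M₃.1, sqrt_JSD_triangle h₁.2.1 h₂.2.1 h₃.2.1]
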